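/- arXiv:1907.09566 — 3 statements merged into one kernel-verified Lean document; each statement's English description precedes it below -/
import Mathlib

section
/- For every y = (y₁, …, yₙ) ∈ ℝ^{3n}, the Euclidean distance from y to the singular set Σ satisfies dist(y, Σ) = min{ |yᵢ − R_j|, (1/√2)|y_k − y_l| : 1 ≤ i ≤ n, 1 ≤ j ≤ m, 1 ≤ k < l ≤ n }, provided the index set is nonempty (i.e. m ≥ 1 or n ≥ 2). -/
/-!
Σ is a finite union of the affine subspaces {xᵢ = R_j} and the linear subspaces {x_k = x_l}, so
it suffices to exhibit, for each candidate value, a point of Σ at that distance, and to bound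
the distance to every point of Σ below by some candidate. Replacing yᵢ by R_j, resp. y_k and
y_l by their midpoint, gives the points. For z with z_k = z_l, the triangle inequality and
(a + b)² ≤ 2(a² + b²) give |y_k - y_l|² ≤ 2(|y_k - z_k|² + |y_l - z_l|²) ≤ 2|y - z|².
-/

/-- The `i`-th ℝ³-component of a point of `ℝ^{3n} ≅ (ℝ³)ⁿ`, realized as
`EuclideanSpace ℝ (Fin n × Fin 3)` with the Euclidean norm. -/
noncomputable def comp3 {n : ℕ} (x : EuclideanSpace ℝ (Fin n × Fin 3)) (i : Fin n) :
    EuclideanSpace ℝ (Fin 3) := WithLp.toLp 2 (fun a => x (i, a))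

/-- The singular set `Σ` of the Coulomb potential of a molecule with `n` electrons and
`m` nuclei located at `R 1, …, R m ∈ ℝ³`. -/
def singularSet (n m : ℕ) (R : Fin m → EuclideanSpace ℝ (Fin 3)) :
    Set (EuclideanSpace ℝ (Fin n × Fin 3)) :=
  {x | (∃ i j, comp3 x i = R j) ∨ ∃ k l, k < l ∧ comp3 x k = comp3 x l}

theorem Metric.infDist_eq_sInf_of_forall {X : Type*} [PseudoMetricSpace X] {x : X}
    {s : Set X} {D : Set ℝ} (hD : ∀ d ∈ D, ∃ z ∈ s, dist x z ≤ d)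
    (hs : ∀ z ∈ s, ∃ d ∈ D, d ≤ dist x z) :
    infDist x s = sInf D := by
  rcases s.eq_empty_or_nonempty with rfl | hsne
  · have hD_empty : D = ∅ :=
      Set.eq_empty_of_forall_notMem fun d hd => by simpa using hD d hd
    rw [hD_empty, infDist_empty, Real.sInf_empty]
  have hDne : D.Nonempty := let ⟨z, hz⟩ := hsne; let ⟨d, hd, _⟩ := hs z hz; ⟨d, hd⟩
  have hDbdd : BddBelow D := ⟨0, fun d hd => let ⟨z, _, hz⟩ := hD d hd; dist_nonneg.trans hz⟩
  refine le_antisymm (le_csInf hDne fun d hd => ?_) ((le_infDist hsne).2 fun z hz => ?_)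
  · obtain ⟨z, hz, hzd⟩ := hD d hd
    exact (infDist_le_dist_of_mem hz).trans hzd
  · obtain ⟨d, hd, hdz⟩ := hs z hz
    exact (csInf_le hDbdd hd).trans hdz

theorem dist_sq_le_two_mul_add {X : Type*} [PseudoMetricSpace X] (a b c : X) :
    dist a b ^ 2 ≤ 2 * (dist a c ^ 2 + dist b c ^ 2) := by
  nlinarith [dist_triangle_right a b c, dist_nonneg (x := a) (y := b),
    sq_nonneg (dist a c - dist b c)]

section Components

variable {n : ℕ}

theorem dist_sq_eq_sum_dist_comp3_sq (y x : EuclideanSpace ℝ (Fin n × Fin 3)) :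
    dist y x ^ 2 = ∑ i, dist (comp3 y i) (comp3 x i) ^ 2 := by
  rw [EuclideanSpace.dist_eq, Real.sq_sqrt (by positivity), Fintype.sum_prod_type]
  congr! 1 with i
  rw [EuclideanSpace.dist_eq, Real.sq_sqrt (by positivity)]
  rfl

theorem dist_comp3_le (y x : EuclideanSpace ℝ (Fin n × Fin 3)) (i : Fin n) :
    dist (comp3 y i) (comp3 x i) ≤ dist y x := by
  refine le_of_sq_le_sq ?_ dist_nonneg
  rw [dist_sq_eq_sum_dist_comp3_sq]
  exact Finset.single_le_sum (f := fun i => dist (comp3 y i) (comp3 x i) ^ 2)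
    (fun _ _ => sq_nonneg _) (Finset.mem_univ i)

theorem dist_comp3_div_sqrt_two_le {y x : EuclideanSpace ℝ (Fin n × Fin 3)} {k l : Fin n}
    (hkl : k ≠ l) (hx : comp3 x k = comp3 x l) :
    dist (comp3 y k) (comp3 y l) / √2 ≤ dist y x := by
  have hsum : dist (comp3 y k) (comp3 x k) ^ 2 + dist (comp3 y l) (comp3 x l) ^ 2
      ≤ dist y x ^ 2 := by
    rw [dist_sq_eq_sum_dist_comp3_sq,
      ← Finset.sum_pair (f := fun i => dist (comp3 y i) (comp3 x i) ^ 2) hkl]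
    exact Finset.sum_le_univ_sum_of_nonneg fun _ => sq_nonneg _
  have htri := dist_sq_le_two_mul_add (comp3 y k) (comp3 y l) (comp3 x k)
  rw [div_le_iff₀ (by positivity), ← pow_le_pow_iff_left₀ dist_nonneg (by positivity) two_ne_zero,
    mul_pow, Real.sq_sqrt zero_le_two]
  rw [hx] at hsum htri
  linarith

noncomputable def replaceComp3 (y : EuclideanSpace ℝ (Fin n × Fin 3)) (s : Finset (Fin n))
    (c : EuclideanSpace ℝ (Fin 3)) : EuclideanSpace ℝ (Fin n × Fin 3) :=
  WithLp.toLp 2 fun p => if p.1 ∈ s then c p.2 else y p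

theorem comp3_replaceComp3 (y : EuclideanSpace ℝ (Fin n × Fin 3)) (s : Finset (Fin n))
    (c : EuclideanSpace ℝ (Fin 3)) (i : Fin n) :
    comp3 (replaceComp3 y s c) i = if i ∈ s then c else comp3 y i := by
  by_cases h : i ∈ s <;> ext a <;> simp [comp3, replaceComp3, h]

theorem dist_replaceComp3_sq (y : EuclideanSpace ℝ (Fin n × Fin 3)) (s : Finset (Fin n))
    (c : EuclideanSpace ℝ (Fin 3)) :
    dist y (replaceComp3 y s c) ^ 2 = ∑ i ∈ s, dist (comp3 y i) c ^ 2 := by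
  simp [dist_sq_eq_sum_dist_comp3_sq, comp3_replaceComp3, apply_ite, Finset.sum_ite_mem]

theorem dist_replaceComp3_singleton (y : EuclideanSpace ℝ (Fin n × Fin 3)) (i : Fin n)
    (c : EuclideanSpace ℝ (Fin 3)) :
    dist y (replaceComp3 y {i} c) = dist (comp3 y i) c :=
  (pow_left_inj₀ dist_nonneg dist_nonneg two_ne_zero).1 <| by
    rw [dist_replaceComp3_sq, Finset.sum_singleton]

theorem dist_replaceComp3_pair_midpoint (y : EuclideanSpace ℝ (Fin n × Fin 3)) {k l : Fin n}
    (hkl : k ≠ l) :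
    dist y (replaceComp3 y {k, l} (midpoint ℝ (comp3 y k) (comp3 y l))) =
      dist (comp3 y k) (comp3 y l) / √2 :=
  (pow_left_inj₀ dist_nonneg (by positivity) two_ne_zero).1 <| by
    rw [dist_replaceComp3_sq, Finset.sum_pair hkl, dist_left_midpoint, dist_right_midpoint,
      div_pow, Real.sq_sqrt zero_le_two]
    norm_num
    ring

end Components

theorem infDist_to_singularSet_general (n m : ℕ)
    (R : Fin m → EuclideanSpace ℝ (Fin 3))
    (y : EuclideanSpace ℝ (Fin n × Fin 3)) :
    Metric.infDist y (singularSet n m R) =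
      sInf ({d : ℝ | ∃ i j, d = ‖comp3 y i - R j‖} ∪
        {d : ℝ | ∃ k l, k < l ∧ d = ‖comp3 y k - comp3 y l‖ / Real.sqrt 2}) := by
  simp only [← dist_eq_norm]
  refine Metric.infDist_eq_sInf_of_forall ?_ ?_
  · rintro d (⟨i, j, rfl⟩ | ⟨k, l, hkl, rfl⟩)
    · refine ⟨replaceComp3 y {i} (R j), Or.inl ⟨i, j, ?_⟩, (dist_replaceComp3_singleton y i _).le⟩
      simp [comp3_replaceComp3]
    · refine ⟨_, Or.inr ⟨k, l, hkl, ?_⟩, (dist_replaceComp3_pair_midpoint y hkl.ne).le⟩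
      simp [comp3_replaceComp3]
  · rintro x (⟨i, j, hx⟩ | ⟨k, l, hkl, hx⟩)
    · exact ⟨_, Or.inl ⟨i, j, rfl⟩, hx ▸ dist_comp3_le y x i⟩
    · exact ⟨_, Or.inr ⟨k, l, hkl, rfl⟩, dist_comp3_div_sqrt_two_le hkl.ne hx⟩

/-- Provided the index set is nonempty (`m ≥ 1` or `n ≥ 2`), the Euclidean distance from
`y ∈ ℝ^{3n}` to the singular set `Σ` is the minimum of the numbers `‖yᵢ - R_j‖`
(`1 ≤ i ≤ n`, `1 ≤ j ≤ m`) and `‖y_k - y_l‖/√2` (`1 ≤ k < l ≤ n`). -/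
theorem infDist_to_singularSet (n m : ℕ) (hn : 1 ≤ n)
    (R : Fin m → EuclideanSpace ℝ (Fin 3)) (hnm : 1 ≤ m ∨ 2 ≤ n)
    (y : EuclideanSpace ℝ (Fin n × Fin 3)) :
    Metric.infDist y (singularSet n m R) =
      sInf ({d : ℝ | ∃ i j, d = ‖comp3 y i - R j‖} ∪
        {d : ℝ | ∃ k l, k < l ∧ d = ‖comp3 y k - comp3 y l‖ / Real.sqrt 2}) :=
  infDist_to_singularSet_general n m R y
end

section
/- For every q > 0 and every y = (y₁, …, yₙ) ∈ ℝ^{3n} with y ∉ Σ, one has dist(y, Σ)^{−q} ≤ Σ_{j=1}^{m} Σ_{i=1}^{n} |yᵢ − R_j|^{−q} + Σ_{1 ≤ k < l ≤ n} ((1/√2)|y_k − y_l|)^{−q}. -/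
/-!
`Σ` is closed, so `dist(y, Σ) = ‖y - z‖` for some `z ∈ Σ`, lying on a plane `zᵢ = R_j` or
`z_k = z_l`. Projecting onto ℝ³-components is 1-Lipschitz, so `|yᵢ - R_j| ≤ ‖y - z‖` in the
first case; in the second `|y_k - y_l|² ≤ 2 (|(y - z)_k|² + |(y - z)_l|²) ≤ 2 ‖y - z‖²`. Either
way `dist(y, Σ)` dominates one of the terms of the right-hand side, and `t ↦ t^{-q}` is
decreasing.
-/

open scoped Real

theorem Metric.infDist_rpow_neg_le_of_forall_mem {α : Type*} [PseudoMetricSpace α]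
    [ProperSpace α] {s : Set α} (hs : IsClosed s) (x : α) {q c : ℝ} (hq : 0 < q)
    (hc : 0 ≤ c) (h : ∀ z ∈ s, ∃ d, 0 < d ∧ d ≤ dist x z ∧ d ^ (-q) ≤ c) :
    Metric.infDist x s ^ (-q) ≤ c := by
  rcases s.eq_empty_or_nonempty with rfl | hne
  -- `infDist x ∅ = 0`, and `0 ^ (-q) = 0` for `q ≠ 0`
  · rwa [Metric.infDist_empty, Real.zero_rpow (neg_ne_zero.2 hq.ne')]
  obtain ⟨z, hz, hdist⟩ := hs.exists_infDist_eq_dist hne x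
  obtain ⟨d, hd, hdz, hdc⟩ := h z hz
  rw [hdist]
  exact (Real.rpow_le_rpow_of_nonpos hd hdz (neg_nonpos.2 hq.le)).trans hdc

theorem norm_sub_sq_le_two_mul {E : Type*} [SeminormedAddCommGroup E] (a b : E) :
    ‖a - b‖ ^ 2 ≤ 2 * (‖a‖ ^ 2 + ‖b‖ ^ 2) := by
  nlinarith [norm_sub_le a b, norm_nonneg (a - b), sq_nonneg (‖a‖ - ‖b‖)]

section comp3

variable {n : ℕ}

theorem comp3_sub (x z : EuclideanSpace ℝ (Fin n × Fin 3)) (i : Fin n) :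
    comp3 (x - z) i = comp3 x i - comp3 z i := rfl

theorem continuous_comp3 (i : Fin n) :
    Continuous fun x : EuclideanSpace ℝ (Fin n × Fin 3) => comp3 x i := by
  unfold comp3
  fun_prop

theorem norm_sq_eq_sum_norm_comp3_sq (x : EuclideanSpace ℝ (Fin n × Fin 3)) :
    ‖x‖ ^ 2 = ∑ i, ‖comp3 x i‖ ^ 2 := by
  simp only [EuclideanSpace.norm_sq_eq, Fintype.sum_prod_type]
  rfl

theorem norm_comp3_le (x : EuclideanSpace ℝ (Fin n × Fin 3)) (i : Fin n) :
    ‖comp3 x i‖ ≤ ‖x‖ := by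
  refine le_of_pow_le_pow_left₀ two_ne_zero (norm_nonneg x) ?_
  rw [norm_sq_eq_sum_norm_comp3_sq]
  exact Finset.single_le_sum (f := fun i => ‖comp3 x i‖ ^ 2) (fun _ _ => by positivity)
    (Finset.mem_univ i)

theorem norm_comp3_sub_comp3_le_dist (x z : EuclideanSpace ℝ (Fin n × Fin 3)) (i : Fin n) :
    ‖comp3 x i - comp3 z i‖ ≤ dist x z := by
  rw [← comp3_sub, dist_eq_norm]
  exact norm_comp3_le _ i

theorem norm_comp3_sq_add_norm_comp3_sq_le (x : EuclideanSpace ℝ (Fin n × Fin 3))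
    {k l : Fin n} (hkl : k ≠ l) :
    ‖comp3 x k‖ ^ 2 + ‖comp3 x l‖ ^ 2 ≤ ‖x‖ ^ 2 := by
  rw [norm_sq_eq_sum_norm_comp3_sq, ← Finset.sum_pair (f := fun i => ‖comp3 x i‖ ^ 2) hkl]
  exact Finset.sum_le_sum_of_subset_of_nonneg (Finset.subset_univ _) fun _ _ _ => by positivity

theorem norm_comp3_sub_comp3_div_sqrt_two_le_dist (x z : EuclideanSpace ℝ (Fin n × Fin 3))
    {k l : Fin n} (hkl : k ≠ l) (hz : comp3 z k = comp3 z l) :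
    1 / √2 * ‖comp3 x k - comp3 x l‖ ≤ dist x z := by
  have hsplit : comp3 x k - comp3 x l = comp3 (x - z) k - comp3 (x - z) l := by
    rw [comp3_sub, comp3_sub, hz, sub_sub_sub_cancel_right]
  refine le_of_pow_le_pow_left₀ two_ne_zero dist_nonneg ?_
  calc (1 / √2 * ‖comp3 x k - comp3 x l‖) ^ 2
      = ‖comp3 (x - z) k - comp3 (x - z) l‖ ^ 2 / 2 := by
        rw [mul_pow, div_pow, Real.sq_sqrt zero_le_two, hsplit]; ring
    _ ≤ ‖comp3 (x - z) k‖ ^ 2 + ‖comp3 (x - z) l‖ ^ 2 := by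
        linarith [norm_sub_sq_le_two_mul (comp3 (x - z) k) (comp3 (x - z) l)]
    _ ≤ dist x z ^ 2 := by
        rw [dist_eq_norm]; exact norm_comp3_sq_add_norm_comp3_sq_le _ hkl

theorem isClosed_singularSet (m : ℕ) (R : Fin m → EuclideanSpace ℝ (Fin 3)) :
    IsClosed (singularSet n m R) := by
  simp only [singularSet, Set.ofPred_or, Set.ofPred_exists, Set.ofPred_and]
  exact (isClosed_iUnion_of_finite fun i => isClosed_iUnion_of_finite fun j =>
      isClosed_eq (continuous_comp3 i) continuous_const).union
    (isClosed_iUnion_of_finite fun k => isClosed_iUnion_of_finite fun l =>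
      isClosed_const.inter (isClosed_eq (continuous_comp3 k) (continuous_comp3 l)))

end comp3

theorem infDist_singularSet_rpow_neg_le_general (n m : ℕ)
    (R : Fin m → EuclideanSpace ℝ (Fin 3)) (q : ℝ) (hq : 0 < q)
    (y : EuclideanSpace ℝ (Fin n × Fin 3)) (hy : y ∉ singularSet n m R) :
    Metric.infDist y (singularSet n m R) ^ (-q) ≤
      (∑ j : Fin m, ∑ i : Fin n, ‖comp3 y i - R j‖ ^ (-q)) +
        ∑ p ∈ Finset.univ.filter (fun p : Fin n × Fin n => p.1 < p.2),
          ((1 / Real.sqrt 2) * ‖comp3 y p.1 - comp3 y p.2‖) ^ (-q) := by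
  have hnucl (i : Fin n) (j : Fin m) : 0 ≤ ‖comp3 y i - R j‖ ^ (-q) :=
    Real.rpow_nonneg (norm_nonneg _) _
  have hpair (p : Fin n × Fin n) : 0 ≤ (1 / √2 * ‖comp3 y p.1 - comp3 y p.2‖) ^ (-q) :=
    Real.rpow_nonneg (mul_nonneg (by positivity) (norm_nonneg _)) _
  have hnucl_sum : 0 ≤ ∑ j, ∑ i, ‖comp3 y i - R j‖ ^ (-q) :=
    Finset.sum_nonneg fun j _ => Finset.sum_nonneg fun i _ => hnucl i j
  have hpair_sum : 0 ≤ ∑ p ∈ Finset.univ.filter (fun p : Fin n × Fin n => p.1 < p.2),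
      (1 / √2 * ‖comp3 y p.1 - comp3 y p.2‖) ^ (-q) :=
    Finset.sum_nonneg fun p _ => hpair p
  refine Metric.infDist_rpow_neg_le_of_forall_mem (isClosed_singularSet m R) y hq
    (add_nonneg hnucl_sum hpair_sum) fun z hz => ?_
  rcases hz with ⟨i, j, hz⟩ | ⟨k, l, hkl, hz⟩
  · have hpos : 0 < ‖comp3 y i - R j‖ :=
      norm_pos_iff.2 <| sub_ne_zero.2 fun h => hy <| .inl ⟨i, j, h⟩
    have hterm : ‖comp3 y i - R j‖ ^ (-q) ≤ ∑ j, ∑ i, ‖comp3 y i - R j‖ ^ (-q) :=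
      (Finset.single_le_sum (fun i _ => hnucl i j) (Finset.mem_univ i)).trans
        (Finset.single_le_sum (fun j _ => Finset.sum_nonneg fun i _ => hnucl i j)
          (Finset.mem_univ j))
    exact ⟨_, hpos, hz ▸ norm_comp3_sub_comp3_le_dist y z i,
      le_add_of_le_of_nonneg hterm hpair_sum⟩
  · have hpos : 0 < 1 / √2 * ‖comp3 y k - comp3 y l‖ :=
      mul_pos (by positivity) <| norm_pos_iff.2 <| sub_ne_zero.2 fun h => hy <| .inr ⟨k, l, hkl, h⟩
    have hmem : (k, l) ∈ Finset.univ.filter (fun p : Fin n × Fin n => p.1 < p.2) := by simp [hkl]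
    have hterm := Finset.single_le_sum (fun p _ => hpair p) hmem
    exact ⟨_, hpos, norm_comp3_sub_comp3_div_sqrt_two_le_dist y z hkl.ne hz,
      le_add_of_nonneg_of_le hnucl_sum hterm⟩

/-- For every `q > 0` and every `y ∉ Σ` one has
`dist(y,Σ)^{-q} ≤ ∑_{j,i} ‖yᵢ - R_j‖^{-q} + ∑_{k<l} ((1/√2)‖y_k - y_l‖)^{-q}`. -/
theorem infDist_singularSet_rpow_neg_le (n m : ℕ) (hn : 1 ≤ n)
    (R : Fin m → EuclideanSpace ℝ (Fin 3)) (q : ℝ) (hq : 0 < q)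
    (y : EuclideanSpace ℝ (Fin n × Fin 3)) (hy : y ∉ singularSet n m R) :
    Metric.infDist y (singularSet n m R) ^ (-q) ≤
      (∑ j : Fin m, ∑ i : Fin n, ‖comp3 y i - R j‖ ^ (-q)) +
        ∑ p ∈ Finset.univ.filter (fun p : Fin n × Fin n => p.1 < p.2),
          ((1 / Real.sqrt 2) * ‖comp3 y p.1 - comp3 y p.2‖) ^ (-q) :=
  infDist_singularSet_rpow_neg_le_general n m R q hq y hy
end

section
/- Let N ∈ ℕ, let Σ ⊂ ℝ^N be a closed set, and let f be a positive, twice continuously differentiable real-valued function on the open set ℝ^N \ Σ. Assume there are constants c₁, c₂ > 0 such that for all x ∈ ℝ^N \ Σ: ‖∇f(x)‖ ≤ c₁ f(x) and ‖Hess f(x)‖ ≤ c₂ · min(1, dist(x, Σ))^{−1} · f(x), where Hess f(x) is the second (Fréchet) derivative of f at x with its operator norm. Then there exist constants A₁, A₂ > 0 such that for all x ∈ ℝ^N \ Σ and all v ∈ ℝ^N, ‖2 · Hess(−log f)(x) v‖ ≤ (A₁ + A₂ dist(x, Σ)^{−1}) ‖v‖, where 2 · Hess(−log f) is the Bakry–Emery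 Ricci tensor of the weighted space with weight Φ = −log f. -/
/-! For `Φ = -log f` one has `D²Φ = (Df ⊗ Df) / f² - D²f / f`, so the two hypotheses bound
the two terms by `c₁²` and `c₂ min(1, d)⁻¹ ≤ c₂ (1 + d⁻¹)`. Passing from `D²Φ` to the
derivative of `∇Φ` costs nothing, since `∇Φ` is `DΦ` followed by the Riesz isometry. -/

open Real InnerProductSpace Filter Topology

section Gradient

variable {E : Type*} [NormedAddCommGroup E] [InnerProductSpace ℝ E] [CompleteSpace E]

theorem norm_gradient (f : E → ℝ) (x : E) : ‖gradient f x‖ = ‖fderiv ℝ f x‖ :=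
  (toDual ℝ E).symm.norm_map _

theorem norm_fderiv_gradient_apply (f : E → ℝ) (x v : E) :
    ‖fderiv ℝ (gradient f) x v‖ = ‖fderiv ℝ (fderiv ℝ f) x v‖ := by
  have hcomp : gradient f = (toDual ℝ E).symm ∘ fderiv ℝ f := rfl
  rw [hcomp, LinearIsometryEquiv.comp_fderiv]
  exact (toDual ℝ E).symm.norm_map _

end Gradient

section NegLog

variable {E : Type*} [NormedAddCommGroup E] [NormedSpace ℝ E] {f : E → ℝ} {x : E}

theorem fderiv_neg_log_eventuallyEq (hf : ContDiffAt ℝ 1 f x) (hx : f x ≠ 0) :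
    fderiv ℝ (fun y => -log (f y)) =ᶠ[𝓝 x] fun y => -(f y)⁻¹ • fderiv ℝ f y := by
  filter_upwards [hf.eventually (by simp), hf.continuousAt.eventually_ne hx] with y hfy hy
  exact ((hfy.differentiableAt one_ne_zero).hasFDerivAt.log hy).neg.fderiv.trans
    (neg_smul _ _).symm

theorem fderiv_fderiv_neg_log_apply (hf : ContDiffAt ℝ 2 f x) (hx : f x ≠ 0) (v : E) :
    fderiv ℝ (fderiv ℝ fun y => -log (f y)) x v =
      ((f x ^ 2)⁻¹ * fderiv ℝ f x v) • fderiv ℝ f x -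
        (f x)⁻¹ • fderiv ℝ (fderiv ℝ f) x v := by
  have hD2 : HasFDerivAt (fderiv ℝ f) (fderiv ℝ (fderiv ℝ f) x) x :=
    ((hf.fderiv_right (m := 1) (by norm_num)).differentiableAt (by norm_num)).hasFDerivAt
  have hinv : HasFDerivAt (fun y => -(f y)⁻¹) ((f x ^ 2)⁻¹ • fderiv ℝ f x) x := by
    have h := ((hasDerivAt_inv hx).comp_hasFDerivAt x
      (hf.differentiableAt (by norm_num)).hasFDerivAt).neg
    rwa [neg_smul, neg_neg] at h
  rw [(fderiv_neg_log_eventuallyEq (hf.of_le one_le_two) hx).fderiv_eq,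
    (hinv.fun_smul hD2).fderiv]
  simp [sub_eq_neg_add]

theorem norm_fderiv_fderiv_neg_log_apply_le (hf : ContDiffAt ℝ 2 f x) (hx : f x ≠ 0) (v : E) :
    ‖fderiv ℝ (fderiv ℝ fun y => -log (f y)) x v‖ ≤
      ((‖fderiv ℝ f x‖ / |f x|) ^ 2 + ‖fderiv ℝ (fderiv ℝ f) x‖ / |f x|) * ‖v‖ := by
  rw [fderiv_fderiv_neg_log_apply hf hx]
  refine (norm_sub_le _ _).trans ?_
  have hgrad : ‖((f x ^ 2)⁻¹ * fderiv ℝ f x v) • fderiv ℝ f x‖ ≤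
      (‖fderiv ℝ f x‖ / |f x|) ^ 2 * ‖v‖ := by
    rw [norm_smul, norm_mul, norm_inv, norm_pow, norm_eq_abs, div_pow, sq_abs]
    calc _ ≤ (f x ^ 2)⁻¹ * (‖fderiv ℝ f x‖ * ‖v‖) * ‖fderiv ℝ f x‖ := by
          gcongr; exact (fderiv ℝ f x).le_opNorm v
      _ = _ := by ring
  have hhess : ‖(f x)⁻¹ • fderiv ℝ (fderiv ℝ f) x v‖ ≤
      ‖fderiv ℝ (fderiv ℝ f) x‖ / |f x| * ‖v‖ := by
    rw [norm_smul, norm_inv, norm_eq_abs, inv_mul_eq_div, div_mul_eq_mul_div]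
    gcongr
    exact (fderiv ℝ (fderiv ℝ f) x).le_opNorm v
  linarith

end NegLog

theorem inv_min_one_le_one_add_inv {d : ℝ} (hd : 0 ≤ d) : (min 1 d)⁻¹ ≤ 1 + d⁻¹ := by
  rcases le_total 1 d with h | h
  · rw [min_eq_left h, inv_one]
    exact le_add_of_nonneg_right (inv_nonneg.2 hd)
  · rw [min_eq_right h]
    exact le_add_of_nonneg_left zero_le_one

theorem bakryEmery_ricci_bound_general {N : ℕ} (S : Set (EuclideanSpace ℝ (Fin N)))
    (hS : IsClosed S) (f : EuclideanSpace ℝ (Fin N) → ℝ)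
    (hf_pos : ∀ x ∉ S, 0 < f x) (hf : ContDiffOn ℝ 2 f Sᶜ)
    (c₁ c₂ : ℝ) (hc₂ : 0 < c₂)
    (hgrad : ∀ x ∉ S, ‖gradient f x‖ ≤ c₁ * f x)
    (hhess : ∀ x ∉ S,
      ‖iteratedFDeriv ℝ 2 f x‖ ≤ c₂ * (min 1 (Metric.infDist x S))⁻¹ * f x) :
    ∃ A₁ A₂ : ℝ, 0 < A₁ ∧ 0 < A₂ ∧
      ∀ x ∉ S, ∀ v : EuclideanSpace ℝ (Fin N),
        ‖(2 : ℝ) • fderiv ℝ (gradient (fun y => -Real.log (f y))) x v‖ ≤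
          (A₁ + A₂ * (Metric.infDist x S)⁻¹) * ‖v‖ := by
  refine ⟨2 * (c₁ ^ 2 + c₂), 2 * c₂, by positivity, by positivity, fun x hx v => ?_⟩
  have hfx : ContDiffAt ℝ 2 f x := hf.contDiffAt (hS.isOpen_compl.mem_nhds hx)
  have hpos : 0 < f x := hf_pos x hx
  have hD1 : ‖fderiv ℝ f x‖ / |f x| ≤ c₁ := by
    rw [abs_of_pos hpos, div_le_iff₀ hpos, ← norm_gradient]
    exact hgrad x hx
  have hD2 : ‖fderiv ℝ (fderiv ℝ f) x‖ / |f x| ≤ c₂ * (1 + (Metric.infDist x S)⁻¹) := by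
    rw [abs_of_pos hpos, div_le_iff₀ hpos, ← norm_iteratedFDeriv_one,
      norm_iteratedFDeriv_fderiv]
    refine (hhess x hx).trans ?_
    gcongr
    exact inv_min_one_le_one_add_inv Metric.infDist_nonneg
  rw [norm_smul, norm_fderiv_gradient_apply, Real.norm_two]
  calc 2 * ‖fderiv ℝ (fderiv ℝ fun y => -log (f y)) x v‖
      ≤ 2 * ((c₁ ^ 2 + c₂ * (1 + (Metric.infDist x S)⁻¹)) * ‖v‖) := by
        gcongr
        refine (norm_fderiv_fderiv_neg_log_apply_le hfx hpos.ne' v).trans ?_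
        gcongr
    _ = _ := by ring

/-- Let `Σ ⊂ ℝ^N` be closed and let `f` be positive and `C²` on `ℝ^N \ Σ` with
`‖∇f‖ ≤ c₁ f` and `‖Hess f‖ ≤ c₂ min(1, dist(·,Σ))⁻¹ f` there. Then the Bakry–Émery
Ricci tensor `Ric_Φ = 2 Hess Φ` of the weight `Φ = -log f` satisfies
`‖Ric_Φ(x) v‖ ≤ (A₁ + A₂ dist(x,Σ)⁻¹) ‖v‖` off `Σ`, for some constants `A₁, A₂ > 0`. -/
theorem bakryEmery_ricci_bound {N : ℕ} (S : Set (EuclideanSpace ℝ (Fin N)))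
    (hS : IsClosed S) (f : EuclideanSpace ℝ (Fin N) → ℝ)
    (hf_pos : ∀ x ∉ S, 0 < f x) (hf : ContDiffOn ℝ 2 f Sᶜ)
    (c₁ c₂ : ℝ) (hc₁ : 0 < c₁) (hc₂ : 0 < c₂)
    (hgrad : ∀ x ∉ S, ‖gradient f x‖ ≤ c₁ * f x)
    (hhess : ∀ x ∉ S,
      ‖iteratedFDeriv ℝ 2 f x‖ ≤ c₂ * (min 1 (Metric.infDist x S))⁻¹ * f x) :
    ∃ A₁ A₂ : ℝ, 0 < A₁ ∧ 0 < A₂ ∧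
      ∀ x ∉ S, ∀ v : EuclideanSpace ℝ (Fin N),
        ‖(2 : ℝ) • fderiv ℝ (gradient (fun y => -Real.log (f y))) x v‖ ≤
          (A₁ + A₂ * (Metric.infDist x S)⁻¹) * ‖v‖ :=
  bakryEmery_ricci_bound_general S hS f hf_pos hf c₁ c₂ hc₂ hgrad hhess
end
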